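/- For Dyck words u, v, p, q, where u has semilength k and v has semilength l, swapping the adjacent blocks u and v does not change the parity of the number of inversions: inversions(p·u·v·q) ≡ inversions(p·v·u·q) (mod 2), since the swap changes the inversion count by k·l − l·k = 0. -/

import Mathlib

/-- An inversion of a bracket word (`true` = open, `false` = close) is a pair of
positions `i < j` with a close at `i` and an open at `j`. -/
def inversions (w : List Bool) : ℕ :=
  (Finset.univ.filter (fun p : Fin w.length × Fin w.length =>
    p.1 < p.2 ∧ w.get p.1 = false ∧ w.get p.2 = true)).card

/-- A Dyck word: every prefix has at least as many opens as closes, and totals agree. -/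
def IsDyck (w : List Bool) : Prop :=
  (∀ k, (w.take k).count false ≤ (w.take k).count true) ∧ w.count true = w.count false

lemma count_eq_sum (b : Bool) (w : List Bool) :
    w.count b = ∑ j : Fin w.length, if w.get j = b then 1 else 0 := by
  induction w with
  | nil => simp
  | cons x w ih =>
    simp only [List.length_cons]
    rw [Fin.sum_univ_succ]
    simp [List.count_cons, ih, Nat.add_comm, beq_iff_eq]
    congr 1

lemma inversions_eq_sum (w : List Bool) :
    inversions w = ∑ i : Fin w.length, ∑ j : Fin w.length,
      if i < j ∧ w.get i = false ∧ w.get j = true then 1 else 0 := by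
  rw [inversions, Finset.card_filter, Fintype.sum_prod_type]

lemma inversions_cons (x : Bool) (w : List Bool) :
    inversions (x :: w) = (if x = false then w.count true else 0) + inversions w := by
  rw [inversions_eq_sum, inversions_eq_sum]
  simp only [List.length_cons]
  rw [Fin.sum_univ_succ]
  congr 1
  · rw [Fin.sum_univ_succ]
    simp only [Fin.not_lt_zero, false_and, if_false, zero_add]
    by_cases hx : x = false
    · simp [hx, count_eq_sum, Fin.succ_pos]
    · simp [hx]
  · apply Finset.sum_congr rfl
    intro i _
    rw [Fin.sum_univ_succ]
    simp [Fin.succ_lt_succ_iff]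

lemma inversions_append (a b : List Bool) :
    inversions (a ++ b) = inversions a + inversions b + a.count false * b.count true := by
  induction a with
  | nil => simp [inversions]
  | cons x a ih =>
    rw [List.cons_append, inversions_cons, ih, inversions_cons, List.count_cons,
      List.count_append]
    by_cases hx : x = false <;> simp [hx] <;> ring

theorem inversions_swap_blocks_parity (p u v q : List Bool)
    (hp : IsDyck p) (hu : IsDyck u) (hv : IsDyck v) (hq : IsDyck q) :
    inversions (p ++ u ++ v ++ q) % 2 = inversions (p ++ v ++ u ++ q) % 2 := by
  have key : inversions (p ++ u ++ v ++ q) = inversions (p ++ v ++ u ++ q) := by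
    simp only [inversions_append, List.count_append]
    rw [hu.2, hv.2]
    ring
  rw [key]
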